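/- Let n₁, n₂ be positive integers and n = n₁ + n₂. Let D₁ be an n₁×n₁ real symmetric positive definite matrix and D₂ an n₂×n₂ real symmetric positive definite matrix, and let a₁ ∈ ℝ^{n₁}, b₂ ∈ ℝ^{n₂} with (a₁, b₂) ≠ (0, 0). Define the block vectors a = (a₁, 0), b = (0, b₂) ∈ ℝⁿ and the block matrices C_A = blockDiag(D₁, 0), C_B = blockDiag(0, D₂) (n×n matrices), so that the two manifolds are supported on complementary coordinate subspaces intersecting only at the origin. Then C_A + C_B = blockDiag(D₁, D₂) is invertible and, with M = (C_A + C_B)⁻¹, the normalized signal mismatch distance equals 1: (a − b)ᵀ M (a − b) / (aᵀ M a + bᵀ M b) = 1. -/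

import Mathlib

/-!
`C_A + C_B = blockDiag(D₁, D₂)` is positive definite, and its inverse is `blockDiag(D₁⁻¹, D₂⁻¹)`.
Vectors supported on complementary blocks are orthogonal for this inverse, so the numerator
`(a - b)ᵀ M (a - b)` equals the denominator `aᵀ M a + bᵀ M b`; it is positive because `M` is
positive definite and `a - b = (a₁, -b₂) ≠ 0`.
-/

namespace Matrix

variable {m n R : Type*} [Fintype m] [Fintype n]

theorem sumElim_dotProduct_fromBlocks_zero_mulVec_sumElim [NonUnitalNonAssocSemiring R]
    (A : Matrix m m R) (D : Matrix n n R) (x u : m → R) (y v : n → R) :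
    Sum.elim x y ⬝ᵥ fromBlocks A 0 0 D *ᵥ Sum.elim u v = x ⬝ᵥ A *ᵥ u + y ⬝ᵥ D *ᵥ v := by
  simp [fromBlocks_mulVec, sumElim_dotProduct_sumElim]

theorem PosDef.fromBlocks_zero [Ring R] [PartialOrder R] [StarRing R] [IsOrderedAddMonoid R]
    {A : Matrix m m R} {D : Matrix n n R} (hA : A.PosDef) (hD : D.PosDef) :
    (fromBlocks A 0 0 D).PosDef := by
  refine .of_dotProduct_mulVec_pos (hA.isHermitian.fromBlocks (by simp) hD.isHermitian) ?_
  intro x hx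
  obtain ⟨u, v, rfl⟩ : ∃ u v, x = Sum.elim u v := ⟨_, _, (Sum.elim_comp_inl_inr x).symm⟩
  rw [Function.star_sumElim, sumElim_dotProduct_fromBlocks_zero_mulVec_sumElim]
  by_cases hu : u = 0
  · subst hu
    have hv : v ≠ 0 := by rintro rfl; exact hx Sum.elim_zero_zero
    simpa using hD.dotProduct_mulVec_pos hv
  · exact add_pos_of_pos_of_nonneg (hA.dotProduct_mulVec_pos hu)
      (hD.posSemidef.dotProduct_mulVec_nonneg v)

theorem inv_fromBlocks_zero [DecidableEq m] [DecidableEq n] [CommRing R]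
    (A : Matrix m m R) (D : Matrix n n R) (hAD : IsUnit A ↔ IsUnit D) :
    (fromBlocks A 0 0 D)⁻¹ = fromBlocks A⁻¹ 0 0 D⁻¹ := by
  simpa using inv_fromBlocks_zero₂₁_of_isUnit_iff A 0 D hAD

end Matrix

open Matrix in
theorem signal_mismatch_distance_independent_general (n₁ n₂ : ℕ)
    (D₁ : Matrix (Fin n₁) (Fin n₁) ℝ) (D₂ : Matrix (Fin n₂) (Fin n₂) ℝ)
    (hD₁ : D₁.PosDef) (hD₂ : D₂.PosDef)
    (a₁ : Fin n₁ → ℝ) (b₂ : Fin n₂ → ℝ) (hab : a₁ ≠ 0 ∨ b₂ ≠ 0)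
    (a b : Fin n₁ ⊕ Fin n₂ → ℝ)
    (ha : a = Sum.elim a₁ (0 : Fin n₂ → ℝ)) (hb : b = Sum.elim (0 : Fin n₁ → ℝ) b₂)
    (CA CB : Matrix (Fin n₁ ⊕ Fin n₂) (Fin n₁ ⊕ Fin n₂) ℝ)
    (hCA : CA = Matrix.fromBlocks D₁ 0 0 0)
    (hCB : CB = Matrix.fromBlocks 0 0 0 D₂) :
    CA + CB = Matrix.fromBlocks D₁ 0 0 D₂
    ∧ IsUnit (CA + CB)
    ∧ ((a - b) ⬝ᵥ (CA + CB)⁻¹.mulVec (a - b))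
        / (a ⬝ᵥ (CA + CB)⁻¹.mulVec a + b ⬝ᵥ (CA + CB)⁻¹.mulVec b) = 1 := by
  have hsum : CA + CB = fromBlocks D₁ 0 0 D₂ := by simp [hCA, hCB, fromBlocks_add]
  have hpd : (CA + CB).PosDef := hsum ▸ hD₁.fromBlocks_zero hD₂
  refine ⟨hsum, hpd.isUnit, ?_⟩
  have hinv : (CA + CB)⁻¹ = fromBlocks D₁⁻¹ 0 0 D₂⁻¹ := by
    rw [hsum, inv_fromBlocks_zero _ _ (iff_of_true hD₁.isUnit hD₂.isUnit)]
  have hdiff : a - b = Sum.elim a₁ (-b₂) := by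
    ext (i | j) <;> simp [ha, hb]
  have hnum : (a - b) ⬝ᵥ (CA + CB)⁻¹ *ᵥ (a - b)
      = a ⬝ᵥ (CA + CB)⁻¹ *ᵥ a + b ⬝ᵥ (CA + CB)⁻¹ *ᵥ b := by
    rw [hdiff, hinv, ha, hb]
    simp [sumElim_dotProduct_fromBlocks_zero_mulVec_sumElim, mulVec_neg]
  have hne : a - b ≠ 0 := by
    rwa [hdiff, Ne, ← Sum.elim_zero_zero, Sum.elim_eq_iff, neg_eq_zero, not_and_or]
  have hpos : 0 < (a - b) ⬝ᵥ (CA + CB)⁻¹ *ᵥ (a - b) := by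
    simpa using hpd.inv.dotProduct_mulVec_pos hne
  rw [← hnum]
  exact div_self hpos.ne'

open Matrix in
/-- Independent manifolds have normalized signal mismatch distance `1`:
if manifold A is supported on the first block of coordinates (signal vector
`(a₁, 0)`, second-moment matrix `blockDiag(D₁, 0)`) and manifold B on the
complementary block (signal vector `(0, b₂)`, second-moment matrix
`blockDiag(0, D₂)`), with `D₁, D₂` symmetric positive definite and
`(a₁, b₂) ≠ (0, 0)`, then `C_A + C_B = blockDiag(D₁, D₂)` is invertible and,
with `M = (C_A + C_B)⁻¹`, `(a − b)ᵀ M (a − b) / (aᵀ M a + bᵀ M b) = 1`. -/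
theorem signal_mismatch_distance_independent (n₁ n₂ : ℕ)
    (hn₁ : 0 < n₁) (hn₂ : 0 < n₂)
    (D₁ : Matrix (Fin n₁) (Fin n₁) ℝ) (D₂ : Matrix (Fin n₂) (Fin n₂) ℝ)
    (hD₁symm : D₁.IsSymm) (hD₂symm : D₂.IsSymm)
    (hD₁ : D₁.PosDef) (hD₂ : D₂.PosDef)
    (a₁ : Fin n₁ → ℝ) (b₂ : Fin n₂ → ℝ) (hab : a₁ ≠ 0 ∨ b₂ ≠ 0)
    (a b : Fin n₁ ⊕ Fin n₂ → ℝ)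
    (ha : a = Sum.elim a₁ (0 : Fin n₂ → ℝ)) (hb : b = Sum.elim (0 : Fin n₁ → ℝ) b₂)
    (CA CB : Matrix (Fin n₁ ⊕ Fin n₂) (Fin n₁ ⊕ Fin n₂) ℝ)
    (hCA : CA = Matrix.fromBlocks D₁ 0 0 0)
    (hCB : CB = Matrix.fromBlocks 0 0 0 D₂) :
    CA + CB = Matrix.fromBlocks D₁ 0 0 D₂
    ∧ IsUnit (CA + CB)
    ∧ ((a - b) ⬝ᵥ (CA + CB)⁻¹.mulVec (a - b))
        / (a ⬝ᵥ (CA + CB)⁻¹.mulVec a + b ⬝ᵥ (CA + CB)⁻¹.mulVec b) = 1 :=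
  signal_mismatch_distance_independent_general n₁ n₂ D₁ D₂ hD₁ hD₂ a₁ b₂ hab a b ha hb CA CB hCA hCB
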